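/- arXiv:math/0112056 — 4 statements merged into one kernel-verified Lean document; each statement's English description precedes it below -/
import Mathlib

section
/- Let (a_n)_{n≥0} be a sequence of real numbers, let k be a positive integer, α ∈ ℝ and β > 1, and suppose there is a sequence (r_n) with r_n → 0 such that a_n = α + (2/(n−k+1))·Σ_{j=0}^{n−k} (j/n)^β·a_j + r_n for all n ≥ k. Then (a_n) converges and lim_{n→∞} a_n = α·(β+1)/(β−1). -/
open Filter Finset
open scoped Topology

/-
The weights `w n j = 2 / (n - k + 1) * (j / n) ^ β`, `j ≤ n - k`, form a Riemann sum for
`2 ∫₀¹ x ^ β dx = 2 / (β + 1) < 1`, and each fixed column `w · j` tends to `0`. With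
`L = α (β + 1) / (β - 1)` the fixed point of `L = α + 2 L / (β + 1)`, the sequence
`b = a - L` satisfies `b n = ∑ j, w n j * b j + o(1)`. Since the total weight is eventually below
some `c < 1`, `b` is bounded (a new record `|b n|` is at most `c |b n| + O(1)`), and splitting
off finitely many columns gives `limsup |b| ≤ c limsup |b|`, so `b → 0`.
-/

lemma integral_rpow_zero_left (β : ℝ) (hβ : -1 < β) (x : ℝ) :
    ∫ t in (0 : ℝ)..x, t ^ β = x ^ (β + 1) / (β + 1) := by
  rw [integral_rpow (Or.inl hβ), Real.zero_rpow (by linarith), sub_zero]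

lemma sum_range_rpow_le (β : ℝ) (hβ : 0 ≤ β) (m : ℕ) :
    ∑ j ∈ range m, (j : ℝ) ^ β ≤ (m : ℝ) ^ (β + 1) / (β + 1) := by
  have := ((Real.monotoneOn_rpow_Ici_of_exponent_nonneg hβ).mono
    Set.Icc_subset_Ici_self).sum_le_integral (x₀ := 0) (a := m)
  simpa [integral_rpow_zero_left β (by linarith)] using this

lemma le_sum_range_succ_rpow (β : ℝ) (hβ : 0 ≤ β) (m : ℕ) :
    (m : ℝ) ^ (β + 1) / (β + 1) ≤ ∑ j ∈ range (m + 1), (j : ℝ) ^ β := by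
  have := ((Real.monotoneOn_rpow_Ici_of_exponent_nonneg hβ).mono
    Set.Icc_subset_Ici_self).integral_le_sum (x₀ := 0) (a := m)
  rw [zero_add, integral_rpow_zero_left β (by linarith)] at this
  rw [sum_range_succ']
  simp only [zero_add, Nat.cast_add, Nat.cast_one] at this ⊢
  linarith [Real.rpow_nonneg (le_refl (0 : ℝ)) β]

theorem tendsto_sum_range_rpow_div (β : ℝ) (hβ : 0 ≤ β) :
    Tendsto (fun m : ℕ => (∑ j ∈ range m, (j : ℝ) ^ β) / (m : ℝ) ^ (β + 1)) atTop
      (𝓝 (β + 1)⁻¹) := by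
  rw [← tendsto_add_atTop_iff_nat 1]
  have hlower : Tendsto (fun m : ℕ => ((m : ℝ) / (m + 1)) ^ (β + 1) / (β + 1)) atTop
      (𝓝 (β + 1)⁻¹) := by
    have := ((Real.continuousAt_rpow_const 1 (β + 1) (Or.inl one_ne_zero)).tendsto.comp
      (tendsto_natCast_div_add_atTop (1 : ℝ))).div_const (β + 1)
    simpa [Function.comp_def] using this
  refine tendsto_of_tendsto_of_tendsto_of_le_of_le hlower tendsto_const_nhds
    (fun m => ?_) fun m => ?_
  all_goals have hpos : (0 : ℝ) < ((m : ℝ) + 1) ^ (β + 1) := by positivity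
  all_goals push_cast
  · rw [le_div_iff₀ hpos, Real.div_rpow (by positivity) (by positivity), div_right_comm,
      div_mul_cancel₀ _ hpos.ne']
    exact le_sum_range_succ_rpow β hβ m
  · rw [div_le_iff₀ hpos, ← div_eq_inv_mul]
    exact_mod_cast sum_range_rpow_le β hβ (m + 1)

lemma sum_two_div_mul_rpow_eq (β : ℝ) {m : ℕ} {x : ℝ} (hm : 0 < m) (hx : 0 < x) :
    ∑ j ∈ range m, 2 / (m : ℝ) * ((j : ℝ) / x) ^ β =
      2 * ((∑ j ∈ range m, (j : ℝ) ^ β) / (m : ℝ) ^ (β + 1)) * ((m : ℝ) / x) ^ β := by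
  have hm' : (0 : ℝ) < m := by exact_mod_cast hm
  simp_rw [Real.div_rpow (Nat.cast_nonneg _) hx.le, ← mul_div_assoc, ← sum_div, ← mul_sum,
    Real.rpow_add_one hm'.ne']
  have := Real.rpow_pos_of_pos hm' β
  have := Real.rpow_pos_of_pos hx β
  field_simp

theorem tendsto_sum_two_div_mul_rpow (β : ℝ) (hβ : 0 ≤ β) (k : ℕ) :
    Tendsto (fun n : ℕ =>
        ∑ j ∈ range (n - k + 1), 2 / ((n : ℝ) - k + 1) * ((j : ℝ) / n) ^ β)
      atTop (𝓝 (2 / (β + 1))) := by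
  have hsize : Tendsto (fun n : ℕ => n - k + 1) atTop atTop :=
    (tendsto_add_atTop_nat 1).comp (tendsto_sub_atTop_nat k)
  have hratio : Tendsto (fun n : ℕ => (((n - k + 1 : ℕ) : ℝ) / n) ^ β) atTop (𝓝 1) := by
    have h : Tendsto (fun n : ℕ => 1 + (1 - k : ℝ) / n) atTop (𝓝 1) := by
      simpa using (tendsto_const_div_atTop_nhds_zero_nat (1 - k : ℝ)).const_add 1
    have := (Real.continuousAt_rpow_const 1 β (Or.inl one_ne_zero)).tendsto.comp h
    rw [Real.one_rpow] at this
    refine this.congr' ?_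
    filter_upwards [eventually_ge_atTop (max k 1)] with n hn
    have hn' : (0 : ℝ) < n := by exact_mod_cast (le_max_right k 1).trans hn
    rw [Function.comp_apply, Nat.cast_add, Nat.cast_sub ((le_max_left k 1).trans hn),
      Nat.cast_one]
    congr 1
    field_simp
    ring
  have := ((((tendsto_sum_range_rpow_div β hβ).comp hsize).const_mul 2).mul hratio)
  rw [mul_one, ← div_eq_mul_inv] at this
  refine this.congr' ?_
  filter_upwards [eventually_ge_atTop (max k 1)] with n hn
  have hkn : k ≤ n := (le_max_left k 1).trans hn
  have hn' : (0 : ℝ) < n := by exact_mod_cast (le_max_right k 1).trans hn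
  rw [Function.comp_apply, ← sum_two_div_mul_rpow_eq β (by omega : 0 < n - k + 1) hn',
    Nat.cast_add, Nat.cast_sub hkn, Nat.cast_one]

lemma tendsto_two_div_mul_rpow_zero (β : ℝ) (hβ : 0 ≤ β) (k j : ℕ) :
    Tendsto (fun n : ℕ => 2 / ((n : ℝ) - k + 1) * ((j : ℝ) / n) ^ β) atTop (𝓝 0) := by
  have hden : Tendsto (fun n : ℕ => (n : ℝ) - k + 1) atTop atTop := by
    simpa only [sub_eq_add_neg] using tendsto_atTop_add_const_right _ 1
      (tendsto_atTop_add_const_right _ (-(k : ℝ)) tendsto_natCast_atTop_atTop)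
  have hpow := (Real.continuousAt_rpow_const 0 β (Or.inr hβ)).tendsto.comp
    (tendsto_const_div_atTop_nhds_zero_nat (j : ℝ))
  simpa using (tendsto_const_nhds.div_atTop hden).mul hpow

section WeightedSum

variable {u e : ℕ → ℝ} {w : ℕ → ℕ → ℝ} {s : ℕ → Finset ℕ} {c : ℝ}

lemma exists_forall_le_of_le_weighted_sum (hu : ∀ n, 0 ≤ u n)
    (hs : ∀ n, ∀ j ∈ s n, j ≤ n) (hc : c < 1)
    (hw : ∀ᶠ n in atTop, ∀ j ∈ s n, 0 ≤ w n j)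
    (hwc : ∀ᶠ n in atTop, ∑ j ∈ s n, w n j ≤ c)
    (hrec : ∀ᶠ n in atTop, u n ≤ ∑ j ∈ s n, w n j * u j + e n)
    (he : IsBoundedUnder (· ≤ ·) atTop e) : ∃ B, ∀ n, u n ≤ B := by
  obtain ⟨E, hE⟩ := he
  obtain ⟨N, hN⟩ := eventually_atTop.1 (hw.and (hwc.and (hrec.and hE)))
  refine ⟨max (∑ j ∈ range N, u j) (E / (1 - c)), fun n => ?_⟩
  induction n using Nat.strong_induction_on with
  | _ n ih =>
  rcases lt_or_ge n N with hn | hn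
  · exact le_max_of_le_left (single_le_sum (fun j _ => hu j) (mem_range.2 hn))
  by_contra! hlt
  obtain ⟨hw0, hwc, hun, hen⟩ := hN n hn
  -- a record value `u n` dominates the weighted sum
  have hmax : ∀ j ∈ s n, u j ≤ u n := fun j hj =>
    (hs n j hj).lt_or_eq.elim (fun h => (ih j h).trans hlt.le) fun h => h ▸ le_rfl
  have : u n ≤ c * u n + E := calc
    u n ≤ ∑ j ∈ s n, w n j * u j + e n := hun
    _ ≤ (∑ j ∈ s n, w n j) * u n + E := by
      rw [sum_mul]
      exact add_le_add
        (sum_le_sum fun j hj => mul_le_mul_of_nonneg_left (hmax j hj) (hw0 j hj)) hen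
    _ ≤ c * u n + E := by gcongr; exact hu n
  have : u n ≤ E / (1 - c) := by rw [le_div_iff₀ (by linarith)]; linarith
  exact hlt.not_ge (le_max_of_le_right this)

lemma eventually_le_mul_add_of_le_weighted_sum (hu : ∀ n, 0 ≤ u n) {B : ℝ}
    (hB : ∀ n, u n ≤ B)
    (hw : ∀ᶠ n in atTop, ∀ j ∈ s n, 0 ≤ w n j)
    (hwc : ∀ᶠ n in atTop, ∑ j ∈ s n, w n j ≤ c)
    (hwj : ∀ j, Tendsto (fun n => w n j) atTop (𝓝 0))
    (hrec : ∀ᶠ n in atTop, u n ≤ ∑ j ∈ s n, w n j * u j + e n)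
    (he : Tendsto e atTop (𝓝 0))
    {S : ℝ} (hS : ∀ᶠ n in atTop, u n ≤ S) {ε : ℝ} (hε : 0 < ε) :
    ∀ᶠ n in atTop, u n ≤ c * S + ε := by
  obtain ⟨N, hN⟩ := eventually_atTop.1 hS
  have hS0 : 0 ≤ S := (hu N).trans (hN N le_rfl)
  have hB0 : 0 ≤ B := (hu 0).trans (hB 0)
  have hhead : Tendsto (fun n => ∑ j ∈ range N, |w n j| * B + e n) atTop (𝓝 0) := by
    simpa using (tendsto_finsetSum _ fun j _ => (hwj j).abs.mul_const B).add he
  filter_upwards [hhead.eventually (gt_mem_nhds hε), hw, hwc, hrec]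
    with n hhead hw hwc hrec
  have hlow : ∑ j ∈ s n with j < N, w n j * u j ≤ ∑ j ∈ range N, |w n j| * B := calc
    _ ≤ ∑ j ∈ s n with j < N, |w n j| * B := sum_le_sum fun j _ =>
        (le_abs_self _).trans (by rw [abs_mul, abs_of_nonneg (hu j)]; gcongr; exact hB j)
    _ ≤ _ := sum_le_sum_of_subset_of_nonneg (fun j hj => mem_range.2 (mem_filter.1 hj).2)
        fun _ _ _ => by positivity
  have hhigh : ∑ j ∈ s n with ¬j < N, w n j * u j ≤ c * S := calc
    _ ≤ ∑ j ∈ s n with ¬j < N, w n j * S := sum_le_sum fun j hj =>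
        mul_le_mul_of_nonneg_left (hN j (not_lt.1 (mem_filter.1 hj).2))
          (hw j (mem_filter.1 hj).1)
    _ ≤ ∑ j ∈ s n, w n j * S := sum_le_sum_of_subset_of_nonneg (filter_subset _ _)
        fun j hj _ => mul_nonneg (hw j hj) hS0
    _ ≤ c * S := by rw [← sum_mul]; gcongr
  calc u n ≤ ∑ j ∈ s n, w n j * u j + e n := hrec
    _ = ∑ j ∈ s n with j < N, w n j * u j + ∑ j ∈ s n with ¬j < N, w n j * u j + e n := by
      rw [sum_filter_add_sum_filter_not]
    _ ≤ c * S + ε := by linarith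

theorem tendsto_zero_of_eq_weighted_sum {b : ℕ → ℝ} (hs : ∀ n, ∀ j ∈ s n, j ≤ n)
    (hc : c < 1)
    (hw : ∀ᶠ n in atTop, ∀ j ∈ s n, 0 ≤ w n j)
    (hwc : ∀ᶠ n in atTop, ∑ j ∈ s n, w n j ≤ c)
    (hwj : ∀ j, Tendsto (fun n => w n j) atTop (𝓝 0))
    (hrec : ∀ᶠ n in atTop, b n = ∑ j ∈ s n, w n j * b j + e n)
    (he : Tendsto e atTop (𝓝 0)) :
    Tendsto b atTop (𝓝 0) := by
  have habs : ∀ᶠ n in atTop, |b n| ≤ ∑ j ∈ s n, w n j * |b j| + |e n| := by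
    filter_upwards [hw, hrec] with n hw hrec
    rw [hrec]
    refine (abs_add_le _ _).trans (add_le_add_left ((abs_sum_le_sum_abs _ _).trans_eq ?_) _)
    exact sum_congr rfl fun j hj => by rw [abs_mul, abs_of_nonneg (hw j hj)]
  have hu : ∀ n, 0 ≤ |b n| := fun n => abs_nonneg _
  obtain ⟨B, hB⟩ := exists_forall_le_of_le_weighted_sum hu hs hc hw hwc habs
    he.abs.isBoundedUnder_le
  have hbdd : IsBoundedUnder (· ≤ ·) atTop (fun n => |b n|) := isBoundedUnder_of ⟨B, hB⟩
  set S := limsup (fun n => |b n|) atTop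
  have hstep : ∀ ε > 0, S ≤ c * (S + ε) + ε := fun ε hε =>
    limsup_le_of_le (isBoundedUnder_of ⟨0, hu⟩).isCoboundedUnder_le <|
      eventually_le_mul_add_of_le_weighted_sum hu hB hw hwc hwj habs (by simpa using he.abs)
        ((eventually_lt_of_limsup_lt (lt_add_of_pos_right S hε) hbdd).mono fun _ => le_of_lt)
        hε
  have hlim : Tendsto (fun ε => c * (S + ε) + ε) (𝓝[>] 0) (𝓝 (c * S)) := by
    have : Continuous fun ε : ℝ => c * (S + ε) + ε := by fun_prop
    simpa using (this.tendsto 0).mono_left nhdsWithin_le_nhds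
  have hS : S ≤ 0 := by
    have := ge_of_tendsto hlim (eventually_nhdsWithin_of_forall hstep)
    nlinarith
  refine (tendsto_zero_iff_abs_tendsto_zero b).2 <|
    tendsto_order.2 ⟨fun x hx => ?_, fun x hx => ?_⟩
  · exact Eventually.of_forall fun n => hx.trans_le (hu n)
  · exact eventually_lt_of_limsup_lt (hS.trans_lt hx) hbdd

end WeightedSum

theorem seq_limit_of_recursion_general
    (a : ℕ → ℝ) (k : ℕ) (α β : ℝ) (hβ : 1 < β)
    (r : ℕ → ℝ) (hr : Tendsto r atTop (𝓝 0))
    (h : ∀ n : ℕ, k ≤ n →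
      a n = α + (2 / ((n : ℝ) - (k : ℝ) + 1)) *
        ∑ j ∈ Finset.range (n - k + 1), ((j : ℝ) / (n : ℝ)) ^ β * a j + r n) :
    Tendsto a atTop (𝓝 (α * (β + 1) / (β - 1))) := by
  set L := α * (β + 1) / (β - 1)
  set w : ℕ → ℕ → ℝ := fun n j => 2 / ((n : ℝ) - k + 1) * ((j : ℝ) / n) ^ β
  have hW : Tendsto (fun n => ∑ j ∈ range (n - k + 1), w n j) atTop (𝓝 (2 / (β + 1))) :=
    tendsto_sum_two_div_mul_rpow β (by linarith) k
  obtain ⟨c, hWc, hc⟩ :=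
    exists_between (show 2 / (β + 1) < 1 by rw [div_lt_one] <;> linarith)
  set e := fun n => α + (∑ j ∈ range (n - k + 1), w n j - 1) * L + r n
  have he : Tendsto e atTop (𝓝 0) := by
    have hL : α + (2 / (β + 1) - 1) * L + 0 = 0 := by
      have : β - 1 ≠ 0 := by linarith
      have : β + 1 ≠ 0 := by linarith
      simp only [L]; field_simp; ring
    simpa [hL] using (((hW.sub_const 1).mul_const L).const_add α).add hr
  have hw : ∀ᶠ n in atTop, ∀ j ∈ range (n - k + 1), 0 ≤ w n j := by
    filter_upwards [eventually_ge_atTop k] with n hn j _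
    have : (k : ℝ) ≤ n := by exact_mod_cast hn
    exact mul_nonneg (div_nonneg zero_le_two (by linarith)) (by positivity)
  have hrec :
      ∀ᶠ n in atTop, a n - L = ∑ j ∈ range (n - k + 1), w n j * (a j - L) + e n := by
    filter_upwards [eventually_ge_atTop k] with n hn
    simp only [w, e, mul_sub, sum_sub_distrib, ← sum_mul, mul_assoc, ← mul_sum, h n hn]
    ring
  have := tendsto_zero_of_eq_weighted_sum (fun n j hj => by rw [mem_range] at hj; omega) hc hw
    (hW.eventually (ge_mem_nhds hWc)) (tendsto_two_div_mul_rpow_zero β (by linarith) k)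
    hrec he
  simpa using this.add_const L

/-- **Lemma 2.1, first part.** If `a_n = α + (2/(n-k+1)) Σ_{j=0}^{n-k} (j/n)^β a_j + o(1)`
with `β > 1`, then `a_n → α (β+1)/(β-1)`. -/
theorem seq_limit_of_recursion
    (a : ℕ → ℝ) (k : ℕ) (hk : 0 < k) (α β : ℝ) (hβ : 1 < β)
    (r : ℕ → ℝ) (hr : Tendsto r atTop (𝓝 0))
    (h : ∀ n : ℕ, k ≤ n →
      a n = α + (2 / ((n : ℝ) - (k : ℝ) + 1)) *
        ∑ j ∈ Finset.range (n - k + 1), ((j : ℝ) / (n : ℝ)) ^ β * a j + r n) :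
    Tendsto a atTop (𝓝 (α * (β + 1) / (β - 1))) :=
  seq_limit_of_recursion_general a k α β hβ r hr h
end

section
/- Let (a_n)_{n≥0} be a sequence of nonnegative real numbers, let k be a positive integer, α ∈ ℝ and β > 1, and suppose there is a sequence (r_n) with r_n → 0 such that a_n ≤ α + (2/(n−k+1))·Σ_{j=0}^{n−k} (j/n)^β·a_j + r_n for all n ≥ k. Then sup_{n≥0} a_n < ∞. -/
/-! Comparing with `∫₀^M x^β dx` gives `∑_{j<M} (j/n)^β ≤ M/(β+1)` for `M ≤ n`, so the averaging
term of the recursion is at most `c · sup_{j<n} a_j` with `c = 2/(β+1) < 1`. Once `r_n ≤ 1`, a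
strong induction then keeps `a_n` below `max (sup_{j<N} a_j) ((α+1)/(1-c))`. -/

open Filter Finset
open scoped Topology

theorem sum_range_rpow_le_div {β : ℝ} (hβ : 0 ≤ β) (M : ℕ) :
    ∑ j ∈ range M, (j : ℝ) ^ β ≤ (M : ℝ) ^ (β + 1) / (β + 1) := by
  have hmono : MonotoneOn (fun x : ℝ => x ^ β) (Set.Icc 0 (0 + M)) :=
    fun x hx y _ hxy => Real.rpow_le_rpow hx.1 hxy hβ
  have := hmono.sum_le_integral
  simp only [zero_add] at this
  rwa [integral_rpow (Or.inl (by linarith)), Real.zero_rpow (by linarith), sub_zero] at this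

theorem sum_range_div_rpow_le {β : ℝ} (hβ : 0 ≤ β) {M n : ℕ} (hMn : M ≤ n) :
    ∑ j ∈ range M, ((j : ℝ) / n) ^ β ≤ M / (β + 1) := by
  rcases M.eq_zero_or_pos with rfl | hM
  · simp
  have hM' : (0 : ℝ) < M := by exact_mod_cast hM
  have hn : (0 : ℝ) < n := by exact_mod_cast hM.trans_le hMn
  simp_rw [Real.div_rpow (Nat.cast_nonneg _) hn.le, ← sum_div]
  rw [div_le_div_iff₀ (by positivity) (by positivity)]
  calc (∑ j ∈ range M, (j : ℝ) ^ β) * (β + 1) ≤ (M : ℝ) ^ (β + 1) :=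
        (le_div_iff₀ (by positivity)).mp (sum_range_rpow_le_div hβ M)
    _ = M * (M : ℝ) ^ β := by rw [Real.rpow_add_one hM'.ne', mul_comm]
    _ ≤ M * (n : ℝ) ^ β := by gcongr

theorem two_div_mul_sum_range_div_rpow_mul_le {a : ℕ → ℝ} {β B : ℝ} (hβ : 0 ≤ β) (hB : 0 ≤ B)
    {k n : ℕ} (hk : 0 < k) (hkn : k ≤ n) (ha : ∀ j < n, a j ≤ B) :
    2 / ((n : ℝ) - k + 1) * ∑ j ∈ range (n - k + 1), ((j : ℝ) / n) ^ β * a j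
      ≤ 2 / (β + 1) * B := by
  set M := n - k + 1
  have hM : (M : ℝ) = n - k + 1 := by push_cast [M, Nat.cast_sub hkn]; ring
  have hMn : M ≤ n := by omega
  have hM0 : (0 : ℝ) < M := by positivity
  rw [← hM]
  calc 2 / (M : ℝ) * ∑ j ∈ range M, ((j : ℝ) / n) ^ β * a j
      ≤ 2 / (M : ℝ) * ∑ j ∈ range M, ((j : ℝ) / n) ^ β * B := by
        gcongr with j hj
        exact ha j ((mem_range.mp hj).trans_le hMn)
    _ ≤ 2 / (M : ℝ) * (M / (β + 1) * B) := by
        rw [← sum_mul]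
        gcongr
        exact sum_range_div_rpow_le hβ hMn
    _ = 2 / (β + 1) * B := by field_simp

theorem bddAbove_range_of_eventually_le_add_mul {a : ℕ → ℝ} {K c : ℝ} (hc : c < 1)
    (h : ∀ᶠ n in atTop, ∀ B, 0 ≤ B → (∀ j < n, a j ≤ B) → a n ≤ K + c * B) :
    BddAbove (Set.range a) := by
  obtain ⟨N, hN⟩ := eventually_atTop.mp h
  obtain ⟨b, hb⟩ := ((range N).image a).bddAbove
  set B := max b (max 0 (K / (1 - c)))
  have hB0 : 0 ≤ B := le_max_of_le_right (le_max_left _ _)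
  have hKB : K + c * B ≤ B := by
    have : K / (1 - c) ≤ B := le_max_of_le_right (le_max_right _ _)
    rw [div_le_iff₀ (by linarith)] at this
    linarith
  refine ⟨B, Set.forall_mem_range.mpr fun n => ?_⟩
  induction n using Nat.strong_induction_on with
  | _ n ih =>
    rcases lt_or_ge n N with hn | hn
    · exact le_max_of_le_left (hb (by simpa using ⟨n, hn, rfl⟩))
    · exact (hN n hn B hB0 ih).trans hKB

theorem seq_bounded_of_recursive_bound_general
    (a : ℕ → ℝ) (k : ℕ) (hk : 0 < k) (α β : ℝ) (hβ : 1 < β)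
    (r : ℕ → ℝ) (hr : Tendsto r atTop (𝓝 0))
    (h : ∀ n : ℕ, k ≤ n →
      a n ≤ α + (2 / ((n : ℝ) - (k : ℝ) + 1)) *
        ∑ j ∈ Finset.range (n - k + 1), ((j : ℝ) / (n : ℝ)) ^ β * a j + r n) :
    BddAbove (Set.range a) := by
  refine bddAbove_range_of_eventually_le_add_mul (K := α + 1) (c := 2 / (β + 1))
    ((div_lt_one (by linarith)).mpr (by linarith)) ?_
  filter_upwards [eventually_ge_atTop k, hr.eventually (eventually_le_nhds one_pos)]
    with n hkn hrn B hB ha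
  linarith [h n hkn, two_div_mul_sum_range_div_rpow_mul_le (β := β) (by linarith) hB hk hkn ha]

/-- **Lemma 2.1, second part.** If the nonnegative `a_n` satisfy
`a_n ≤ α + (2/(n-k+1)) Σ_{j=0}^{n-k} (j/n)^β a_j + o(1)` with `β > 1`, then `sup_n a_n < ∞`. -/
theorem seq_bounded_of_recursive_bound
    (a : ℕ → ℝ) (ha : ∀ n, 0 ≤ a n) (k : ℕ) (hk : 0 < k) (α β : ℝ) (hβ : 1 < β)
    (r : ℕ → ℝ) (hr : Tendsto r atTop (𝓝 0))
    (h : ∀ n : ℕ, k ≤ n →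
      a n ≤ α + (2 / ((n : ℝ) - (k : ℝ) + 1)) *
        ∑ j ∈ Finset.range (n - k + 1), ((j : ℝ) / (n : ℝ)) ^ β * a j + r n) :
    BddAbove (Set.range a) :=
  seq_bounded_of_recursive_bound_general a k hk α β hβ r hr h
end

section
/- Let σ ≥ 0 and let (μ_m)_{m≥1} be a sequence of real numbers such that μ_1 = 0, μ_2 = σ², and for every integer m ≥ 3, μ_m = ((m+2)/(m−2))·Σ_{i=1}^{m−1} C(m,i)·(∫₀¹ x^{i/2}·(1−x)^{(m−i)/2} dx)·μ_i·μ_{m−i}, where C(m,i) is the binomial coefficient. Then μ_m = 0 for every odd m, and μ_m = m!·σ^m/(2^{m/2}·(m/2)!) for every even m; that is, the μ_m are the moments of the centered normal distribution with variance σ². -/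
/-!
The recursion determines `μ m` from `μ 1, …, μ (m - 1)`, so it suffices to check that the
Gaussian moments `g m` satisfy it. For odd `m` every summand contains an odd moment. For
`m = 2n`, only the even splits `i = 2j`, `m - i = 2k` survive, and the Beta integral
`B(j + 1, k + 1) = j! k! / (n + 1)!` makes each of them contribute the same amount
`g (2n) / (n + 1)`; there are `n - 1` of them, and the prefactor is `(n + 1) / (n - 1)`.
-/

open Finset Nat

theorem integral_pow_mul_one_sub_pow (a b : ℕ) :
    ∫ x in (0:ℝ)..1, x ^ a * (1 - x) ^ b = (a ! * b ! : ℝ) / (a + b + 1)! := by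
  have hbeta : Complex.betaIntegral (a + 1) (b + 1) = ↑(∫ x in (0:ℝ)..1, x ^ a * (1 - x) ^ b) := by
    rw [Complex.betaIntegral, ← intervalIntegral.integral_ofReal]
    refine intervalIntegral.integral_congr fun x _ => ?_
    push_cast
    simp only [add_sub_cancel_right, Complex.cpow_natCast]
  have hGamma := Complex.Gamma_mul_Gamma_eq_betaIntegral
    (s := (a:ℂ) + 1) (t := (b:ℂ) + 1) (by simp; positivity) (by simp; positivity)
  rw [hbeta, Complex.Gamma_nat_eq_factorial, Complex.Gamma_nat_eq_factorial,
    show (a:ℂ) + 1 + (b + 1) = ((a + b + 1 : ℕ) : ℂ) + 1 by push_cast; ring,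
    Complex.Gamma_nat_eq_factorial] at hGamma
  apply Complex.ofReal_injective
  push_cast
  rw [hGamma, mul_div_cancel_left₀ _ (mod_cast (a + b + 1).factorial_ne_zero)]

theorem sum_Ico_two_mul_eq_sum_Ico_of_odd {M : Type*} [AddCommMonoid M] (f : ℕ → M)
    (hf : ∀ i, Odd i → f i = 0) (n : ℕ) :
    ∑ i ∈ Ico 1 (2 * n), f i = ∑ j ∈ Ico 1 n, f (2 * j) := by
  have hevens : {i ∈ Ico 1 (2 * n) | Even i} = (Ico 1 n).image (2 * ·) := by
    ext i
    simp only [mem_filter, mem_Ico, mem_image, Nat.even_iff]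
    constructor
    · rintro ⟨⟨h1, h2⟩, h3⟩
      exact ⟨i / 2, by omega, by omega⟩
    · rintro ⟨j, ⟨h1, h2⟩, rfl⟩
      omega
  rw [← sum_filter_of_ne (p := Even) fun i _ hi => Nat.not_odd_iff_even.1 (mt (hf i) hi),
    hevens, sum_image fun a _ b _ h => by simpa using h]

noncomputable def gaussianMoment (σ : ℝ) (m : ℕ) : ℝ :=
  if Even m then m ! * σ ^ m / (2 ^ (m / 2) * (m / 2)!) else 0

theorem gaussianMoment_of_odd (σ : ℝ) {m : ℕ} (hm : Odd m) : gaussianMoment σ m = 0 := by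
  simp [gaussianMoment, Nat.not_even_iff_odd.2 hm]

theorem gaussianMoment_two_mul (σ : ℝ) (n : ℕ) :
    gaussianMoment σ (2 * n) = (2 * n)! * σ ^ (2 * n) / (2 ^ n * n !) := by
  simp [gaussianMoment]

theorem choose_mul_beta_mul_gaussianMoment (σ : ℝ) (j k : ℕ) :
    ((2 * j + 2 * k).choose (2 * j) : ℝ) * (j ! * k ! / (j + k + 1)!) *
      gaussianMoment σ (2 * j) * gaussianMoment σ (2 * k) =
      gaussianMoment σ (2 * (j + k)) / (j + k + 1) := by
  rw [Nat.cast_choose ℝ (by omega), Nat.add_sub_cancel_left, ← mul_add,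
    gaussianMoment_two_mul, gaussianMoment_two_mul, gaussianMoment_two_mul,
    Nat.factorial_succ]
  push_cast
  field_simp
  ring

noncomputable def momentRecursion (μ : ℕ → ℝ) (m : ℕ) : ℝ :=
  (((m : ℝ) + 2) / ((m : ℝ) - 2)) *
    ∑ i ∈ Ico 1 m, (m.choose i : ℝ) *
      (∫ x in (0:ℝ)..1, x ^ ((i : ℝ) / 2) * (1 - x) ^ (((m - i : ℕ) : ℝ) / 2)) *
      μ i * μ (m - i)

theorem momentRecursion_congr {μ ν : ℕ → ℝ} {m : ℕ} (h : ∀ i, 1 ≤ i → i < m → μ i = ν i) :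
    momentRecursion μ m = momentRecursion ν m := by
  unfold momentRecursion
  congr 1
  refine sum_congr rfl fun i hi => ?_
  rw [mem_Ico] at hi
  rw [h i hi.1 hi.2, h (m - i) (by omega) (by omega)]

theorem eq_of_momentRecursion {μ ν : ℕ → ℝ} (h1 : μ 1 = ν 1) (h2 : μ 2 = ν 2)
    (hμ : ∀ m, 3 ≤ m → μ m = momentRecursion μ m)
    (hν : ∀ m, 3 ≤ m → ν m = momentRecursion ν m) :
    ∀ m, 1 ≤ m → μ m = ν m := by
  intro m
  induction m using Nat.strong_induction_on with
  | _ m ih =>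
    intro hm
    match m, hm with
    | 1, _ => exact h1
    | 2, _ => exact h2
    | m + 3, _ =>
      rw [hμ _ (by omega), hν _ (by omega)]
      exact momentRecursion_congr fun i hi hlt => ih i hlt hi

theorem gaussianMoment_eq_momentRecursion (σ : ℝ) {m : ℕ} (hm : 3 ≤ m) :
    gaussianMoment σ m = momentRecursion (gaussianMoment σ) m := by
  rcases Nat.even_or_odd' m with ⟨n, rfl | rfl⟩
  · rw [momentRecursion, sum_Ico_two_mul_eq_sum_Ico_of_odd _
      (fun i hi => by rw [gaussianMoment_of_odd σ hi, mul_zero, zero_mul]) n]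
    have hterm : ∀ j ∈ Ico 1 n, ((2 * n).choose (2 * j) : ℝ) *
        (∫ x in (0:ℝ)..1, x ^ (((2 * j : ℕ) : ℝ) / 2) * (1 - x) ^ (((2 * n - 2 * j : ℕ) : ℝ) / 2)) *
        gaussianMoment σ (2 * j) * gaussianMoment σ (2 * n - 2 * j) =
        gaussianMoment σ (2 * n) / (n + 1) := by
      intro j hj
      obtain ⟨k, rfl⟩ := Nat.exists_eq_add_of_le (mem_Ico.1 hj).2.le
      have hexp : ∀ l : ℕ, ((2 * l : ℕ) : ℝ) / 2 = l := fun l => by push_cast; ring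
      rw [show 2 * (j + k) - 2 * j = 2 * k by omega, hexp, hexp]
      simp only [Real.rpow_natCast]
      rw [integral_pow_mul_one_sub_pow, mul_add, choose_mul_beta_mul_gaussianMoment, ← mul_add]
      push_cast
      ring
    rw [sum_congr rfl hterm, sum_const, Nat.card_Ico, nsmul_eq_mul,
      Nat.cast_sub (by omega : 1 ≤ n)]
    have hn : (2 : ℝ) ≤ n := by exact_mod_cast (by omega : 2 ≤ n)
    have hn' : (n : ℝ) - 1 ≠ 0 := by linarith
    push_cast
    field_simp
  · rw [momentRecursion, gaussianMoment_of_odd σ ⟨n, rfl⟩]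
    refine (mul_eq_zero_of_right _ (sum_eq_zero fun i hi => ?_)).symm
    rcases Nat.even_or_odd i with hi_even | hi_odd
    · rw [gaussianMoment_of_odd σ (Nat.Odd.sub_even (mem_Ico.1 hi).2.le ⟨n, rfl⟩ hi_even), mul_zero]
    · rw [gaussianMoment_of_odd σ hi_odd, mul_zero, zero_mul]

theorem moments_of_recursion_are_gaussian_moments_general
    (σ : ℝ) (μ : ℕ → ℝ)
    (h1 : μ 1 = 0) (h2 : μ 2 = σ ^ 2)
    (hrec : ∀ m : ℕ, 3 ≤ m →
      μ m = (((m : ℝ) + 2) / ((m : ℝ) - 2)) *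
        ∑ i ∈ Finset.Ico 1 m, (m.choose i : ℝ) *
          (∫ x in (0:ℝ)..1, x ^ ((i : ℝ) / 2) * (1 - x) ^ (((m - i : ℕ) : ℝ) / 2)) *
          μ i * μ (m - i)) :
    ∀ m : ℕ, 1 ≤ m →
      (Odd m → μ m = 0) ∧
      (Even m → μ m = (m.factorial : ℝ) * σ ^ m / (2 ^ (m / 2) * ((m / 2).factorial : ℝ))) := by
  have hμ := eq_of_momentRecursion (ν := gaussianMoment σ)
    (by rw [h1, gaussianMoment_of_odd σ odd_one])
    (by rw [h2, gaussianMoment]; norm_num [Nat.factorial])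
    hrec (fun m hm => gaussianMoment_eq_momentRecursion σ hm)
  intro m hm
  rw [hμ m hm]
  exact ⟨gaussianMoment_of_odd σ, fun heven => if_pos heven⟩

/-- The moment recursion (2.14) with `μ₁ = 0`, `μ₂ = σ²` has as unique
solution the moments of the centered normal distribution with variance `σ²`. -/
theorem moments_of_recursion_are_gaussian_moments
    (σ : ℝ) (hσ : 0 ≤ σ) (μ : ℕ → ℝ)
    (h1 : μ 1 = 0) (h2 : μ 2 = σ ^ 2)
    (hrec : ∀ m : ℕ, 3 ≤ m →
      μ m = (((m : ℝ) + 2) / ((m : ℝ) - 2)) *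
        ∑ i ∈ Finset.Ico 1 m, (m.choose i : ℝ) *
          (∫ x in (0:ℝ)..1, x ^ ((i : ℝ) / 2) * (1 - x) ^ (((m - i : ℕ) : ℝ) / 2)) *
          μ i * μ (m - i)) :
    ∀ m : ℕ, 1 ≤ m →
      (Odd m → μ m = 0) ∧
      (Even m → μ m = (m.factorial : ℝ) * σ ^ m / (2 ^ (m / 2) * ((m / 2).factorial : ℝ))) :=
  moments_of_recursion_are_gaussian_moments_general σ μ h1 h2 hrec
end

section
/- Let d ≥ 1 and let μ be a Borel probability measure on ℝ^d whose characteristic function ψ(t) = ∫ exp(i·t·x) dμ(x) satisfies ψ(t) = ∫₀¹ ψ(√u·t)·ψ(√(1−u)·t) du for every t ∈ ℝ^d. Fix a ∈ ℝ^d and define the Laplace transform χ_a(s) = ∫₀^∞ exp(−s·w)·ψ(√w·a) dw for s > 0. Then χ_a is differentiable on (0,∞) and satisfies the Riccati equation χ_a′(s) = −χ_a(s)² for all s > 0. -/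
/-!
Differentiating under the integral sign gives `χ_a' = -L[w ↦ w ψ(√w a)]`, where `L` is the
Laplace transform. The substitution `v = u w` turns the functional equation into
`w ψ(√w a) = ∫₀ʷ ψ(√v a) ψ(√(w - v) a) dv`, a convolution of `w ↦ ψ(√w a)` with itself on
`(0, ∞)`, and the Laplace transform maps this convolution to `χ_a²`.
-/

open MeasureTheory Filter Set
open scoped RealInnerProductSpace Complex Real Convolution

noncomputable def laplaceTransform (f : ℝ → ℂ) (s : ℝ) : ℂ :=
  ∫ w in Ioi (0 : ℝ), cexp (-(s : ℂ) * w) * f w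

section LaplaceTransform

variable {f g : ℝ → ℂ} {C D s : ℝ}

lemma norm_cexp_neg_mul (s w : ℝ) : ‖cexp (-(s : ℂ) * w)‖ = rexp (-s * w) := by
  simp [Complex.norm_exp]

lemma integrableOn_laplaceTransform_integrand
    (hf : AEStronglyMeasurable f (volume.restrict (Ioi (0 : ℝ)))) (hb : ∀ w, ‖f w‖ ≤ C)
    (hs : 0 < s) :
    IntegrableOn (fun w : ℝ => cexp (-(s : ℂ) * w) * f w) (Ioi (0 : ℝ)) := by
  refine ((exp_neg_integrableOn_Ioi (0 : ℝ) hs).mul_const C).mono'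
    ((by fun_prop : Continuous fun w : ℝ => cexp (-(s : ℂ) * w)).aestronglyMeasurable.mul hf)
    (ae_of_all _ fun w => ?_)
  rw [norm_mul, norm_cexp_neg_mul]
  exact mul_le_mul_of_nonneg_left (hb w) (Real.exp_nonneg _)

lemma integrableOn_mul_exp_neg_mul (hs : 0 < s) :
    IntegrableOn (fun w : ℝ => w * rexp (-s * w)) (Ioi (0 : ℝ)) :=
  (integrableOn_rpow_mul_exp_neg_mul_rpow (p := 1) (s := 1) (by norm_num) one_pos hs).congr_fun
    (fun w _ => by simp) measurableSet_Ioi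

theorem hasDerivAt_laplaceTransform
    (hf : AEStronglyMeasurable f (volume.restrict (Ioi (0 : ℝ)))) (hb : ∀ w, ‖f w‖ ≤ C)
    (hs : 0 < s) :
    HasDerivAt (laplaceTransform f) (-laplaceTransform (fun w => w * f w) s) s := by
  have hF_meas (x : ℝ) : AEStronglyMeasurable (fun w : ℝ => cexp (-(x : ℂ) * w) * f w)
      (volume.restrict (Ioi (0 : ℝ))) :=
    (by fun_prop : Continuous fun w : ℝ => cexp (-(x : ℂ) * w)).aestronglyMeasurable.mul hf
  have hF'_meas : AEStronglyMeasurable (fun w : ℝ => -(cexp (-(s : ℂ) * w) * (w * f w)))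
      (volume.restrict (Ioi (0 : ℝ))) :=
    ((by fun_prop : Continuous fun w : ℝ => cexp (-(s : ℂ) * w)).aestronglyMeasurable.mul
      ((by fun_prop : Continuous fun w : ℝ => (w : ℂ)).aestronglyMeasurable.mul hf)).neg
  have h_bound : ∀ᵐ (w : ℝ) ∂volume.restrict (Ioi (0 : ℝ)), ∀ x ∈ Metric.ball s (s / 2),
      ‖-(cexp (-(x : ℂ) * w) * (w * f w))‖ ≤ C * (w * rexp (-(s / 2) * w)) := by
    refine (ae_restrict_iff' measurableSet_Ioi).2 (ae_of_all _ fun w (hw : 0 < w) x hx => ?_)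
    have hx : s / 2 ≤ x := by
      have := (abs_lt.1 (Metric.mem_ball.1 hx)).1
      linarith
    rw [norm_neg, norm_mul, norm_mul, norm_cexp_neg_mul, Complex.norm_real,
      Real.norm_of_nonneg hw.le]
    have hexp : rexp (-x * w) ≤ rexp (-(s / 2) * w) := Real.exp_le_exp.2 (by nlinarith)
    calc rexp (-x * w) * (w * ‖f w‖) ≤ rexp (-(s / 2) * w) * (w * C) := by gcongr; exact hb w
      _ = C * (w * rexp (-(s / 2) * w)) := by ring
  have h_diff : ∀ᵐ (w : ℝ) ∂volume.restrict (Ioi (0 : ℝ)), ∀ x ∈ Metric.ball s (s / 2),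
      HasDerivAt (fun x : ℝ => cexp (-(x : ℂ) * w) * f w)
        (-(cexp (-(x : ℂ) * w) * (w * f w))) x := by
    refine ae_of_all _ fun w x _ => ?_
    convert ((hasDerivAt_mul_const (-(w : ℂ))).cexp.mul_const (f w)).comp_ofReal (z := x)
      using 1
    · ext y
      ring_nf
    · simp only [neg_mul, mul_neg, mul_assoc]
  have := hasDerivAt_integral_of_dominated_loc_of_deriv_le (Metric.ball_mem_nhds s (half_pos hs))
    (Eventually.of_forall hF_meas) (integrableOn_laplaceTransform_integrand hf hb hs).integrable
    hF'_meas h_bound ((integrableOn_mul_exp_neg_mul (half_pos hs)).const_mul C) h_diff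
  rw [laplaceTransform, ← integral_neg]
  exact this.2

lemma convolution_indicator_Ioi_exp_mul (s : ℝ) (f g : ℝ → ℂ) (w : ℝ) :
    ((Ioi 0).indicator (fun v : ℝ => cexp (-(s : ℂ) * v) * f v)
        ⋆[ContinuousLinearMap.mul ℂ ℂ]
          (Ioi 0).indicator fun v : ℝ => cexp (-(s : ℂ) * v) * g v) w =
      (Ioi 0).indicator
        (fun w : ℝ => cexp (-(s : ℂ) * w) * ∫ v in (0 : ℝ)..w, f v * g (w - v)) w := by
  have hprod (v : ℝ) :
      (Ioi 0).indicator (fun v : ℝ => cexp (-(s : ℂ) * v) * f v) v *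
        (Ioi 0).indicator (fun v : ℝ => cexp (-(s : ℂ) * v) * g v) (w - v) =
      (Ioo 0 w).indicator (fun v => cexp (-(s : ℂ) * w) * (f v * g (w - v))) v := by
    by_cases hv : 0 < v <;> by_cases hvw : v < w <;>
      simp [indicator, hv, hvw, sub_pos]
    rw [show -((s : ℂ) * w) = -(s * v) + -(s * (w - v)) by ring, Complex.exp_add]
    ring
  rw [convolution_mul]
  simp_rw [hprod]
  rw [integral_indicator measurableSet_Ioo, integral_const_mul]
  rcases le_or_gt w 0 with hw | hw
  · simp [hw]
  · rw [indicator_of_mem (mem_Ioi.2 hw), intervalIntegral.integral_of_le hw.le,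
      integral_Ioc_eq_integral_Ioo]

theorem laplaceTransform_mul
    (hf : AEStronglyMeasurable f (volume.restrict (Ioi (0 : ℝ)))) (hfb : ∀ w, ‖f w‖ ≤ C)
    (hg : AEStronglyMeasurable g (volume.restrict (Ioi (0 : ℝ)))) (hgb : ∀ w, ‖g w‖ ≤ D)
    (hs : 0 < s) :
    laplaceTransform f s * laplaceTransform g s =
      laplaceTransform (fun w => ∫ v in (0 : ℝ)..w, f v * g (w - v)) s := by
  have := integral_convolution (L := ContinuousLinearMap.mul ℂ ℂ) (μ := volume) (ν := volume)
    ((integrable_indicator_iff measurableSet_Ioi).2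
      (integrableOn_laplaceTransform_integrand hf hfb hs))
    ((integrable_indicator_iff measurableSet_Ioi).2
      (integrableOn_laplaceTransform_integrand hg hgb hs))
  simp_rw [convolution_indicator_Ioi_exp_mul, integral_indicator measurableSet_Ioi] at this
  exact this.symm

end LaplaceTransform

theorem ofReal_mul_apply_sqrt_smul_eq_intervalIntegral {E : Type*} [AddCommGroup E] [Module ℝ E]
    {ψ : E → ℂ}
    (heq : ∀ t, ψ t = ∫ u in (0 : ℝ)..1, ψ (Real.sqrt u • t) * ψ (Real.sqrt (1 - u) • t))
    (a : E) {w : ℝ} (hw : 0 < w) :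
    w * ψ (Real.sqrt w • a) =
      ∫ v in (0 : ℝ)..w, ψ (Real.sqrt v • a) * ψ (Real.sqrt (w - v) • a) := by
  have hscale : ψ (Real.sqrt w • a) =
      ∫ u in (0 : ℝ)..1, ψ (Real.sqrt (u * w) • a) * ψ (Real.sqrt (w - u * w) • a) := by
    rw [heq]
    refine intervalIntegral.integral_congr fun u hu => ?_
    rw [uIcc_of_le zero_le_one] at hu
    simp only [smul_smul, ← Real.sqrt_mul hu.1, ← Real.sqrt_mul (sub_nonneg.2 hu.2), sub_mul,
      one_mul]
  rw [hscale, intervalIntegral.integral_comp_mul_right (fun v => ψ (Real.sqrt v • a) *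
    ψ (Real.sqrt (w - v) • a)) hw.ne', zero_mul, one_mul, Complex.real_smul, ← mul_assoc]
  push_cast
  rw [mul_inv_cancel₀ (Complex.ofReal_ne_zero.2 hw.ne'), one_mul]

theorem laplace_transform_riccati_of_integral_equation_general
    (d : ℕ)
    (μ : Measure (EuclideanSpace ℝ (Fin d))) (hμ : IsProbabilityMeasure μ)
    (ψ : EuclideanSpace ℝ (Fin d) → ℂ)
    (hψ : ∀ t, ψ t = ∫ x, Complex.exp ((⟪t, x⟫ : ℝ) * Complex.I) ∂ μ)
    (heq : ∀ t, ψ t = ∫ u in (0:ℝ)..1, ψ (Real.sqrt u • t) * ψ (Real.sqrt (1 - u) • t))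
    (a : EuclideanSpace ℝ (Fin d))
    (χ : ℝ → ℂ)
    (hχ : ∀ s : ℝ, χ s = ∫ w in Set.Ioi (0:ℝ), Complex.exp (-(s : ℂ) * (w : ℂ)) * ψ (Real.sqrt w • a)) :
    ∀ s : ℝ, 0 < s → HasDerivAt χ (-(χ s) ^ 2) s := by
  intro s hs
  have := hμ
  obtain rfl : ψ = charFun μ := funext fun t => by simp_rw [hψ, charFun_apply, real_inner_comm]
  have hf : AEStronglyMeasurable (fun w : ℝ => charFun μ (Real.sqrt w • a))
      (volume.restrict (Ioi (0 : ℝ))) :=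
    (continuous_charFun.comp (by fun_prop)).aestronglyMeasurable
  have hfb (w : ℝ) : ‖charFun μ (Real.sqrt w • a)‖ ≤ 1 := norm_charFun_le_one _
  have hχf : χ = laplaceTransform fun w => charFun μ (Real.sqrt w • a) := funext hχ
  have hmul : laplaceTransform (fun w => w * charFun μ (Real.sqrt w • a)) s = χ s ^ 2 := by
    rw [hχf, sq, laplaceTransform_mul hf hfb hf hfb hs]
    exact setIntegral_congr_fun measurableSet_Ioi fun w hw =>
      congrArg _ (ofReal_mul_apply_sqrt_smul_eq_intervalIntegral heq a hw)
  rw [← hmul, hχf]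
  exact hasDerivAt_laplaceTransform hf hfb hs

/-- If the characteristic function `ψ` of a probability measure on `ℝ^d`
satisfies `ψ(t) = ∫₀¹ ψ(√u t) ψ(√(1-u) t) du`, then for fixed `a` the Laplace transform
`χ_a(s) = ∫₀^∞ e^{-sw} ψ(√w a) dw` is differentiable on `(0, ∞)` and satisfies the Riccati
equation `χ_a'(s) = -χ_a(s)²`. -/
theorem laplace_transform_riccati_of_integral_equation
    (d : ℕ) (hd : 1 ≤ d)
    (μ : Measure (EuclideanSpace ℝ (Fin d))) (hμ : IsProbabilityMeasure μ)
    (ψ : EuclideanSpace ℝ (Fin d) → ℂ)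
    (hψ : ∀ t, ψ t = ∫ x, Complex.exp ((⟪t, x⟫ : ℝ) * Complex.I) ∂ μ)
    (heq : ∀ t, ψ t = ∫ u in (0:ℝ)..1, ψ (Real.sqrt u • t) * ψ (Real.sqrt (1 - u) • t))
    (a : EuclideanSpace ℝ (Fin d))
    (χ : ℝ → ℂ)
    (hχ : ∀ s : ℝ, χ s = ∫ w in Set.Ioi (0:ℝ), Complex.exp (-(s : ℂ) * (w : ℂ)) * ψ (Real.sqrt w • a)) :
    ∀ s : ℝ, 0 < s → HasDerivAt χ (-(χ s) ^ 2) s :=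
  laplace_transform_riccati_of_integral_equation_general d μ hμ ψ hψ heq a χ hχ
end
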